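/- arXiv:2304.02432 — 3 statements merged into one kernel-verified Lean document; each statement's English description precedes it below -/
import Mathlib

section
/- Let a,b be integers with b ≥ a ≥ 2. Every 3-partite 3-uniform hypergraph H with parts V₁,V₂,V₃, where |V₁|=|V₂|=a and |V₃|=b, that contains no matching of size a satisfies e(H) ≤ (a−1)ab. -/
/-!
The triples `(i, i + s, i + t)` (`i ∈ Fin a`), one family for each shift `(s, t) ∈ Fin a × Fin b`,
are `a · b` perfect matchings partitioning `Fin a × Fin a × Fin b`; here `a ≤ b` makes the third
coordinates `i + t` distinct. None of them lies inside `H`, so each contains a non-edge, and `H`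
misses at least `a · b` of the `a · a · b` triples.
-/

open Finset

theorem Finset.card_le_pred_mul_of_forall_exists_notMem {ι P α : Type*} [Fintype ι] [Fintype P]
    (Φ : ι × P ≃ α) (E : Finset α) (h : ∀ p, ∃ i, Φ (i, p) ∉ E) :
    #E ≤ (Fintype.card ι - 1) * Fintype.card P := by
  classical
  have hcard : #E = #{q | Φ q ∈ E} := by
    rw [← card_map Φ.symm.toEmbedding]
    congr 1
    ext q
    simp
  have hfiber (p : P) : #{i | Φ (i, p) ∈ E} ≤ Fintype.card ι - 1 := by
    obtain ⟨i, hi⟩ := h p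
    have : #{i | Φ (i, p) ∈ E} < Fintype.card ι :=
      card_lt_univ_of_notMem (x := i) (by simpa using hi)
    omega
  calc #E = ∑ p, #{i | Φ (i, p) ∈ E} := by
        simp only [hcard, card_filter, Fintype.sum_prod_type_right]
    _ ≤ ∑ _p : P, (Fintype.card ι - 1) := sum_le_sum fun p _ => hfiber p
    _ = (Fintype.card ι - 1) * Fintype.card P := by simp [mul_comm]

theorem exists_notMem_of_not_exists_matching {X Y Z : Type*} [Fintype X]
    [DecidableEq X] [DecidableEq Y] [DecidableEq Z] {E : Finset (X × Y × Z)}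
    (hM : ¬ ∃ M : Finset (X × Y × Z), M ⊆ E ∧ #M = Fintype.card X ∧
      (∀ e ∈ M, ∀ f ∈ M, e ≠ f → e.1 ≠ f.1 ∧ e.2.1 ≠ f.2.1 ∧ e.2.2 ≠ f.2.2))
    {σ : X → Y} {τ : X → Z} (hσ : σ.Injective) (hτ : τ.Injective) :
    ∃ i, (i, σ i, τ i) ∉ E := by
  by_contra! h
  refine hM ⟨univ.image fun i => (i, σ i, τ i), ?_, ?_, ?_⟩
  · simpa [subset_iff] using h
  · exact card_image_of_injective _ fun i j hij => congrArg Prod.fst hij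
  · simp only [mem_image, mem_univ, true_and]
    rintro _ ⟨i, rfl⟩ _ ⟨j, rfl⟩ hne
    have hij : i ≠ j := by rintro rfl; exact hne rfl
    exact ⟨hij, hσ.ne hij, hτ.ne hij⟩

def cyclicTransversals {X Z : Type*} [AddGroup X] [AddGroup Z] (f : X → Z) :
    X × X × Z ≃ X × X × Z :=
  Equiv.prodShear (Equiv.refl X) fun i => (Equiv.addLeft i).prodCongr (Equiv.addLeft (f i))

@[simp]
theorem cyclicTransversals_apply {X Z : Type*} [AddGroup X] [AddGroup Z] (f : X → Z)
    (i s : X) (t : Z) : cyclicTransversals f (i, s, t) = (i, i + s, f i + t) :=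
  rfl

theorem stmt_1_general (a b : ℕ) (hab : a ≤ b)
    (E : Finset (Fin a × Fin a × Fin b))
    (hM : ¬ ∃ M : Finset (Fin a × Fin a × Fin b), M ⊆ E ∧ M.card = a ∧
      (∀ e ∈ M, ∀ f ∈ M, e ≠ f →
        e.1 ≠ f.1 ∧ e.2.1 ≠ f.2.1 ∧ e.2.2 ≠ f.2.2)) :
    E.card ≤ (a - 1) * a * b := by
  rcases Nat.eq_zero_or_pos a with rfl | ha
  · simp [eq_empty_of_isEmpty E]
  have : NeZero a := ⟨ha.ne'⟩
  have : NeZero b := ⟨by omega⟩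
  have hmiss : ∀ p, ∃ i, cyclicTransversals (Fin.castLE hab) (i, p) ∉ E := by
    rintro ⟨s, t⟩
    simpa using exists_notMem_of_not_exists_matching (by rwa [Fintype.card_fin])
      (add_left_injective s) ((add_left_injective t).comp (Fin.castLE_injective hab))
  simpa [mul_assoc] using card_le_pred_mul_of_forall_exists_notMem _ E hmiss

/-- A 3-partite 3-graph with parts of sizes `a, a, b` (`b ≥ a ≥ 2`) and
no matching of size `a` has at most `(a-1)·a·b` edges. -/
theorem stmt_1 (a b : ℕ) (ha : 2 ≤ a) (hab : a ≤ b)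
    (E : Finset (Fin a × Fin a × Fin b))
    (hM : ¬ ∃ M : Finset (Fin a × Fin a × Fin b), M ⊆ E ∧ M.card = a ∧
      (∀ e ∈ M, ∀ f ∈ M, e ≠ f →
        e.1 ≠ f.1 ∧ e.2.1 ≠ f.2.1 ∧ e.2.2 ≠ f.2.2)) :
    E.card ≤ (a - 1) * a * b :=
  stmt_1_general a b hab E hM
end

section
/- For all integers k ≥ 1, n ≥ 3, and 1 ≤ t ≤ n−1, the maximum number of edges in a k-partite k-uniform hypergraph with n vertices in each part and no matching of size t+1 is t·n^{k−1}; moreover equality holds if and only if the hypergraph is isomorphic to K^{(k)}_{t,n}. -/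
open Finset Function

namespace Stmt2Aux

variable {k m t : ℕ}

abbrev V (k m : ℕ) := Fin (k+1) → Fin (m+1)

def noMatch (E : Finset (V k m)) (t : ℕ) : Prop :=
  ¬ ∃ M : Finset (V k m), M ⊆ E ∧ M.card = t + 1 ∧
      (∀ e ∈ M, ∀ f ∈ M, e ≠ f → ∀ i, e i ≠ f i)

def keyfun (σ : Fin (k+1) → Equiv.Perm (Fin (m+1))) (e : V k m) : Fin k → Fin (m+1) :=
  fun j => (σ j.succ).symm (e j.succ) - (σ 0).symm (e 0)

lemma keyfun_eq_imp {σ} {e f : V k m} (h : keyfun σ e = keyfun σ f) (hne : e ≠ f) :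
    ∀ i, e i ≠ f i := by
  have h' : ∀ j : Fin k, (σ j.succ).symm (e j.succ) - (σ 0).symm (e 0)
      = (σ j.succ).symm (f j.succ) - (σ 0).symm (f 0) := fun j => congrFun h j
  have h0 : (σ 0).symm (e 0) ≠ (σ 0).symm (f 0) := by
    intro h0
    apply hne
    funext i
    induction i using Fin.cases with
    | zero => exact (σ 0).symm.injective h0
    | succ j =>
        have := h' j
        rw [h0] at this
        have := sub_left_injective this
        exact (σ j.succ).symm.injective this
  intro i
  induction i using Fin.cases with
  | zero => exact fun hc => h0 (by rw [hc])
  | succ j =>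
      intro hc
      have h2 := h' j
      rw [hc] at h2
      exact h0 (sub_right_injective h2)

lemma fiber_le {E : Finset (V k m)} (hM : noMatch E t) (σ) (d) :
    (E.filter fun e => keyfun σ e = d).card ≤ t := by
  by_contra hlt
  push_neg at hlt
  obtain ⟨M, hMsub, hMcard⟩ := Finset.exists_subset_card_eq hlt
  refine hM ⟨M, hMsub.trans (filter_subset _ _), hMcard, ?_⟩
  intro e he f hf hne
  have he' := mem_filter.mp (hMsub he)
  have hf' := mem_filter.mp (hMsub hf)
  exact keyfun_eq_imp (he'.2.trans hf'.2.symm) hne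

lemma card_eq_sum_fiberwise (E : Finset (V k m)) (σ) :
    E.card = ∑ d : Fin k → Fin (m+1), (E.filter fun e => keyfun σ e = d).card :=
  Finset.card_eq_sum_card_fiberwise (fun x _ => Finset.mem_univ _)

lemma card_le {E : Finset (V k m)} (hM : noMatch E t) : E.card ≤ t * (m+1)^k := by
  rw [card_eq_sum_fiberwise E (fun _ => Equiv.refl _)]
  calc ∑ d : Fin k → Fin (m+1), (E.filter fun e => keyfun (fun _ => Equiv.refl _) e = d).card
      ≤ ∑ _d : Fin k → Fin (m+1), t := by
        exact Finset.sum_le_sum fun d _ => fiber_le hM _ d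
    _ = t * (m+1)^k := by simp [mul_comm]

lemma fiber_eq {E : Finset (V k m)} (hM : noMatch E t) (hcard : E.card = t * (m+1)^k)
    (σ) (d : Fin k → Fin (m+1)) :
    (E.filter fun e => keyfun σ e = d).card = t := by
  have hsum : ∑ d : Fin k → Fin (m+1), (E.filter fun e => keyfun σ e = d).card
      = ∑ _d : Fin k → Fin (m+1), t := by
    rw [← card_eq_sum_fiberwise E σ, hcard]; simp [mul_comm]
  exact (Finset.sum_eq_sum_iff_of_le (fun d _ => fiber_le hM σ d)).mp hsum d (mem_univ d)


def N (E : Finset (V k m)) (g : V k m) : ℕ := if g ∈ E then 1 else 0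

lemma N_le_one (E : Finset (V k m)) (g : V k m) : N E g ≤ 1 := by
  unfold N; split <;> omega

lemma N_eq_one_iff (E : Finset (V k m)) (g : V k m) : N E g = 1 ↔ g ∈ E := by
  unfold N; split <;> simp_all

/-- The points of a "generalized line" given by `σ` (`c ↦ fun i => σ i c`). -/
def pt (σ : Fin (k+1) → Equiv.Perm (Fin (m+1))) (c : Fin (m+1)) : V k m :=
  fun i => σ i c

lemma keyfun_pt (σ) (c : Fin (m+1)) : keyfun (k := k) σ (pt σ c) = 0 := by
  funext j; simp [keyfun, pt]

lemma sum_line {E : Finset (V k m)} (hM : noMatch E t) (hcard : E.card = t * (m+1)^k)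
    (σ : Fin (k+1) → Equiv.Perm (Fin (m+1))) :
    ∑ c : Fin (m+1), N E (pt σ c) = t := by
  have hbij : (univ.filter fun c : Fin (m+1) => pt σ c ∈ E).card
      = (E.filter fun e => keyfun σ e = 0).card := by
    apply Finset.card_bij (fun c _ => pt σ c)
    · intro c hc
      simp only [mem_filter, mem_univ, true_and] at hc ⊢
      exact ⟨hc, keyfun_pt σ c⟩
    · intro c1 h1 c2 h2 hpt
      have := congrFun hpt 0
      simpa [pt] using (σ 0).injective (by simpa [pt] using this)
    · intro g hg
      simp only [mem_filter] at hg
      have hpt : pt σ ((σ 0).symm (g 0)) = g := by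
        funext i
        induction i using Fin.cases with
        | zero => simp [pt]
        | succ j =>
            have h1 := congrFun hg.2 j
            simp only [keyfun, Pi.zero_apply] at h1
            have h2 : (σ j.succ).symm (g j.succ) = (σ 0).symm (g 0) := by
              rwa [sub_eq_zero] at h1
            simp [pt, ← h2]
      exact ⟨(σ 0).symm (g 0), by simp [mem_filter, hpt, hg.1], hpt⟩
  have := fiber_eq hM hcard σ 0
  rw [← hbij] at this
  rw [← this]
  rw [Finset.card_filter]
  rfl


/-- A permutation sending `0 ↦ a` and `1 ↦ b`. -/
def pairPerm (a b : Fin (m+1)) : Equiv.Perm (Fin (m+1)) :=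
  (Equiv.swap 1 (Equiv.swap 0 a b)).trans (Equiv.swap 0 a)

lemma zero_ne_one' (hm : 2 ≤ m) : (0 : Fin (m+1)) ≠ 1 := by
  have h1 : (1 : Fin (m+1)).val = 1 := by
    rw [Fin.val_one']
    exact Nat.mod_eq_of_lt (by omega)
  intro h
  have := congrArg Fin.val h
  rw [h1] at this
  simp at this

lemma pairPerm_zero (hm : 2 ≤ m) (a b : Fin (m+1)) (hab : a ≠ b) : pairPerm a b 0 = a := by
  have h1 : (0 : Fin (m+1)) ≠ 1 := zero_ne_one' hm
  have h2 : (0 : Fin (m+1)) ≠ Equiv.swap 0 a b := by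
    intro hc
    apply hab
    have := congrArg (Equiv.swap 0 a) hc
    rwa [Equiv.swap_apply_left, Equiv.swap_apply_self] at this
  simp only [pairPerm, Equiv.trans_apply]
  rw [Equiv.swap_apply_of_ne_of_ne h1 h2, Equiv.swap_apply_left]

lemma pairPerm_one (a b : Fin (m+1)) : pairPerm a b 1 = b := by
  simp only [pairPerm, Equiv.trans_apply]
  rw [Equiv.swap_apply_left, Equiv.swap_apply_self]

lemma swap_rel {E : Finset (V k m)} (hm : 2 ≤ m) (hM : noMatch E t)
    (hcard : E.card = t * (m+1)^k) {e f : V k m} (hef : ∀ i, e i ≠ f i) (i : Fin (k+1)) :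
    N E e + N E f = N E (update e i (f i)) + N E (update f i (e i)) := by
  have h01 : (0 : Fin (m+1)) ≠ 1 := zero_ne_one' hm
  set σ : Fin (k+1) → Equiv.Perm (Fin (m+1)) := fun j => pairPerm (e j) (f j) with hσ
  set τ : Fin (k+1) → Equiv.Perm (Fin (m+1)) :=
    fun j => if j = i then (Equiv.swap (0 : Fin (m+1)) 1).trans (σ j) else σ j with hτ
  have hσ0 : pt σ 0 = e := by
    funext j; simp [pt, hσ, pairPerm_zero hm _ _ (hef j)]
  have hσ1 : pt σ 1 = f := by
    funext j; simp [pt, hσ, pairPerm_one]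
  have hτ0 : pt τ 0 = update e i (f i) := by
    funext j
    by_cases hj : j = i
    · subst hj
      simp [pt, hτ, hσ, Equiv.swap_apply_left, pairPerm_one]
    · simp [pt, hτ, hσ, hj, pairPerm_zero hm _ _ (hef j), update_of_ne hj]
  have hτ1 : pt τ 1 = update f i (e i) := by
    funext j
    by_cases hj : j = i
    · subst hj
      simp [pt, hτ, hσ, Equiv.swap_apply_right, pairPerm_zero hm _ _ (hef j)]
    · simp [pt, hτ, hσ, hj, pairPerm_one, update_of_ne hj]
  have htail : ∀ c : Fin (m+1), c ≠ 0 → c ≠ 1 → pt τ c = pt σ c := by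
    intro c hc0 hc1
    funext j
    by_cases hj : j = i
    · subst hj; simp [pt, hτ, Equiv.swap_apply_of_ne_of_ne hc0 hc1]
    · simp [pt, hτ, hj]
  have h1 := sum_line hM hcard σ
  have h2 := sum_line hM hcard τ
  have hsub : ({0, 1} : Finset (Fin (m+1))) ⊆ univ := subset_univ _
  rw [← Finset.sum_sdiff hsub] at h1 h2
  rw [Finset.sum_pair h01] at h1 h2
  have hteq : ∑ c ∈ univ \ {0, 1}, N E (pt τ c) = ∑ c ∈ univ \ {0, 1}, N E (pt σ c) := by
    apply Finset.sum_congr rfl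
    intro c hc
    simp only [mem_sdiff, mem_insert, mem_singleton, mem_univ, true_and] at hc
    push_neg at hc
    rw [htail c hc.1 hc.2]
  rw [hσ0, hσ1] at h1
  rw [hτ0, hτ1, hteq] at h2
  omega


lemma diff_rel {E : Finset (V k m)} (hm : 2 ≤ m) (hM : noMatch E t)
    (hcard : E.card = t * (m+1)^k) (i : Fin (k+1)) (b : Fin (m+1)) {e h : V k m}
    (hi : e i = h i) :
    N E e + N E (update h i b) = N E (update e i b) + N E h := by
  by_cases hb : b = e i
  · subst hb
    rw [hi, update_eq_self, ← hi, update_eq_self]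
  · -- choose a vector w agreeing with e at i and disagreeing with both elsewhere
    have hex : ∀ j, ∃ x : Fin (m+1), x ≠ e j ∧ x ≠ h j := by
      intro j
      by_contra hc
      push_neg at hc
      have hsub : (univ : Finset (Fin (m+1))) ⊆ {e j, h j} := by
        intro x _
        by_cases h1 : x = e j
        · simp [h1]
        · simp [hc x h1]
      have := Finset.card_le_card hsub
      simp only [card_univ, Fintype.card_fin] at this
      have h2 : ({e j, h j} : Finset (Fin (m+1))).card ≤ 2 :=
        (card_insert_le _ _).trans (by simp)
      omega
    choose g hg1 hg2 using hex
    set w : V k m := fun j => if j = i then e i else g j with hw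
    have hwi : w i = e i := by simp [hw]
    set f1 : V k m := update w i b with hf1
    have hef1 : ∀ j, e j ≠ f1 j := by
      intro j
      by_cases hj : j = i
      · subst hj; simpa [hf1] using fun hc => hb hc.symm
      · simp only [hf1, update_of_ne hj, hw, if_neg hj]
        exact fun hc => hg1 j hc.symm
    have hhf1 : ∀ j, h j ≠ f1 j := by
      intro j
      by_cases hj : j = i
      · subst hj
        simp only [hf1, update_self]
        rw [← hi]
        exact fun hc => hb hc.symm
      · simp only [hf1, update_of_ne hj, hw, if_neg hj]
        exact fun hc => hg2 j hc.symm
    have r1 := swap_rel hm hM hcard hef1 i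
    have r2 := swap_rel hm hM hcard hhf1 i
    have hf1i : f1 i = b := by simp [hf1]
    have hupd : update f1 i (e i) = w := by
      rw [hf1, update_idem, ← hwi, update_eq_self]
    rw [hf1i, hupd] at r1
    have hupd2 : update f1 i (h i) = w := by
      rw [hf1, update_idem, ← hi, ← hwi, update_eq_self]
    rw [hf1i, hupd2] at r2
    omega

lemma force {E : Finset (V k m)} (hm : 2 ≤ m) (hM : noMatch E t)
    (hcard : E.card = t * (m+1)^k) (i : Fin (k+1)) {e : V k m} {b : Fin (m+1)}
    (he : e ∈ E) (hub : update e i b ∉ E) :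
    (∀ h : V k m, h i = e i → h ∈ E) ∧ (∀ h : V k m, h i = b → h ∉ E) := by
  have hNe : N E e = 1 := (N_eq_one_iff E e).mpr he
  have hNub : N E (update e i b) = 0 := by
    unfold N; simp [hub]
  have key : ∀ h : V k m, h i = e i → h ∈ E ∧ update h i b ∉ E := by
    intro h hi
    have := diff_rel hm hM hcard i b hi.symm
    rw [hNe, hNub] at this
    have h1 := N_le_one E h
    have h2 := N_le_one E (update h i b)
    have hh : N E h = 1 ∧ N E (update h i b) = 0 := by omega
    refine ⟨(N_eq_one_iff E h).mp hh.1, ?_⟩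
    intro hc
    have := (N_eq_one_iff E (update h i b)).mpr hc
    omega
  constructor
  · exact fun h hi => (key h hi).1
  · intro h hi
    have hkey := key (update h i (e i)) (by simp)
    have : update (update h i (e i)) i b = h := by
      rw [update_idem, ← hi, update_eq_self]
    rw [this] at hkey
    exact hkey.2

lemma dep_force {E : Finset (V k m)} (hm : 2 ≤ m) (hM : noMatch E t)
    (hcard : E.card = t * (m+1)^k) (i : Fin (k+1)) {e : V k m} {b : Fin (m+1)}
    (hne : N E (update e i b) ≠ N E e) :
    ∃ a c : Fin (m+1), (∀ h : V k m, h i = a → h ∈ E) ∧ (∀ h : V k m, h i = c → h ∉ E) := by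
  by_cases he : e ∈ E
  · have hub : update e i b ∉ E := by
      intro hc
      apply hne
      rw [(N_eq_one_iff E _).mpr hc, (N_eq_one_iff E e).mpr he]
    exact ⟨e i, b, force hm hM hcard i he hub⟩
  · have hub : update e i b ∈ E := by
      by_contra hc
      apply hne
      unfold N
      simp [he, hc]
    have he' : update (update e i b) i (e i) ∉ E := by
      rwa [update_idem, update_eq_self]
    exact ⟨(update e i b) i, e i, force hm hM hcard i hub he'⟩

lemma only_coord {E : Finset (V k m)} (i₀ : Fin (k+1))
    (hind : ∀ j, j ≠ i₀ → ∀ (g : V k m) b, N E (update g j b) = N E g) (e : V k m) :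
    N E e = N E (fun _ => e i₀) := by
  have main : ∀ s : Finset (Fin (k+1)),
      N E (fun j => if j ∈ s ∧ j ≠ i₀ then e i₀ else e j) = N E e := by
    intro s
    induction s using Finset.induction_on with
    | empty => simp
    | @insert a s ha ih =>
        by_cases hai : a = i₀
        · subst hai
          have : (fun j => if j ∈ insert a s ∧ j ≠ a then e a else e j)
              = (fun j => if j ∈ s ∧ j ≠ a then e a else e j) := by
            funext j
            by_cases hj : j = a
            · simp [hj]
            · simp [hj, Finset.mem_insert]
          rw [this, ih]
        · have : (fun j => if j ∈ insert a s ∧ j ≠ i₀ then e i₀ else e j)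
              = update (fun j => if j ∈ s ∧ j ≠ i₀ then e i₀ else e j) a (e i₀) := by
            funext j
            by_cases hj : j = a
            · subst hj; simp [hai]
            · simp [update_of_ne hj, Finset.mem_insert, hj]
          rw [this, hind a hai, ih]
  have h2 := main univ
  have : (fun j => if j ∈ (univ : Finset (Fin (k+1))) ∧ j ≠ i₀ then e i₀ else e j)
      = (fun _ => e i₀) := by
    funext j
    by_cases hj : j = i₀ <;> simp [hj]
  rw [this] at h2
  exact h2.symm


lemma card_fixed_coord (i₀ : Fin (k+1)) (a : Fin (m+1)) :
    (univ.filter fun e : V k m => e i₀ = a).card = (m+1)^k := by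
  rw [← Fintype.card_subtype]
  have eqv : {e : V k m // e i₀ = a} ≃ ({j : Fin (k+1) // j ≠ i₀} → Fin (m+1)) :=
    { toFun := fun e j => e.1 j.1
      invFun := fun g => ⟨fun j => if hj : j = i₀ then a else g ⟨j, hj⟩, by simp⟩
      left_inv := by
        intro e
        ext j
        by_cases hj : j = i₀
        · subst hj; simp [e.2]
        · simp [hj]
      right_inv := by
        intro g
        funext j
        simp [j.2] }
  rw [Fintype.card_congr eqv, Fintype.card_fun]
  have : Fintype.card {j : Fin (k+1) // j ≠ i₀} = k := by
    simp [Fintype.card_subtype_compl (· = i₀), Fintype.card_subtype_eq]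
  rw [this, Fintype.card_fin]

lemma card_filter_coord (i₀ : Fin (k+1)) (S : Finset (Fin (m+1))) :
    (univ.filter fun e : V k m => e i₀ ∈ S).card = S.card * (m+1)^k := by
  rw [Finset.card_eq_sum_card_fiberwise
    (f := fun e : V k m => e i₀) (t := univ) (fun x _ => mem_univ _)]
  have hterm : ∀ a : Fin (m+1),
      ((univ.filter fun e : V k m => e i₀ ∈ S).filter fun e => e i₀ = a).card
        = if a ∈ S then (m+1)^k else 0 := by
    intro a
    rw [Finset.filter_filter]
    by_cases ha : a ∈ S
    · rw [if_pos ha, ← card_fixed_coord i₀ a]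
      congr 1
      apply Finset.filter_congr
      intro e _
      constructor
      · exact fun hh => hh.2
      · exact fun hh => ⟨hh ▸ ha, hh⟩
    · rw [if_neg ha]
      rw [Finset.card_eq_zero]
      apply Finset.filter_eq_empty_iff.mpr
      intro e _
      rintro ⟨h1, h2⟩
      exact ha (h2 ▸ h1)
  rw [Finset.sum_congr rfl fun a _ => hterm a]
  rw [Finset.sum_ite_mem]
  simp [mul_comm]

theorem main_aux {E : Finset (V k m)} (hm : 2 ≤ m) (hM : noMatch E t) :
    E.card ≤ t * (m+1)^k ∧
    (E.card = t * (m+1)^k ↔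
      ∃ (i₀ : Fin (k+1)) (S : Finset (Fin (m+1))), S.card = t ∧
        E = univ.filter (fun e => e i₀ ∈ S)) := by
  refine ⟨card_le hM, ?_, ?_⟩
  · intro hcard
    classical
    -- find the distinguished coordinate
    have huniq : ∀ i₀ : Fin (k+1),
        (∃ (e : V k m) (b : Fin (m+1)), N E (update e i₀ b) ≠ N E e) →
        ∀ j, j ≠ i₀ → ∀ (g : V k m) b, N E (update g j b) = N E g := by
      intro i₀ ⟨e, b, hdep⟩ j hj g b'
      by_contra hdep'
      obtain ⟨a1, c1, hin1, hout1⟩ := dep_force hm hM hcard i₀ hdep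
      obtain ⟨a2, c2, hin2, hout2⟩ := dep_force hm hM hcard j hdep'
      set x : V k m := fun l => if l = i₀ then a1 else if l = j then c2 else a1 with hx
      have hx1 : x i₀ = a1 := by simp [hx]
      have hx2 : x j = c2 := by simp [hx, hj]
      exact hout2 x hx2 (hin1 x hx1)
    have hfind : ∃ i₀ : Fin (k+1),
        ∀ j, j ≠ i₀ → ∀ (g : V k m) b, N E (update g j b) = N E g := by
      by_cases hP : ∃ i₀ : Fin (k+1), ∃ (e : V k m) (b : Fin (m+1)),
          N E (update e i₀ b) ≠ N E e
      · obtain ⟨i₀, hi₀⟩ := hP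
        exact ⟨i₀, huniq i₀ hi₀⟩
      · push_neg at hP
        exact ⟨0, fun j _ g b => hP j g b⟩
    obtain ⟨i₀, hi₀⟩ := hfind
    refine ⟨i₀, univ.filter (fun a => (fun _ => a : V k m) ∈ E), ?_, ?_⟩
    · have hsl := sum_line hM hcard (fun _ => Equiv.refl _)
      rw [Finset.card_filter]
      rw [← hsl]
      apply Finset.sum_congr rfl
      intro c _
      have hpt : pt (k := k) (fun _ => Equiv.refl (Fin (m+1))) c = fun _ => c := by
        funext i; simp [pt]
      rw [hpt]
      rfl
    · ext e
      simp only [mem_filter, mem_univ, true_and]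
      have := only_coord i₀ hi₀ e
      constructor
      · intro he
        have h1 : N E e = 1 := (N_eq_one_iff E e).mpr he
        rw [this] at h1
        exact (N_eq_one_iff E _).mp h1
      · intro he
        have h1 : N E (fun _ => e i₀) = 1 := (N_eq_one_iff E _).mpr he
        rw [← this] at h1
        exact (N_eq_one_iff E _).mp h1
  · rintro ⟨i₀, S, hS, rfl⟩
    rw [card_filter_coord i₀ S, hS]

end Stmt2Aux


/-- For `k ≥ 1`, `n ≥ 3`, `1 ≤ t ≤ n-1`: a `k`-partite `k`-graph with `n`
vertices in each class (edges encoded as tuples in `Fin k → Fin n`) and no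
matching of size `t+1` has at most `t·n^(k-1)` edges, with equality iff it is
(a copy of) `K^{(k)}_{t,n}`, i.e. all tuples whose `i₀`-coordinate lies in a
fixed `t`-set `S`. -/
theorem stmt_2 (k n t : ℕ) (hk : 1 ≤ k) (hn : 3 ≤ n) (ht : 1 ≤ t) (htn : t ≤ n - 1)
    (E : Finset (Fin k → Fin n))
    (hM : ¬ ∃ M : Finset (Fin k → Fin n), M ⊆ E ∧ M.card = t + 1 ∧
      (∀ e ∈ M, ∀ f ∈ M, e ≠ f → ∀ i, e i ≠ f i)) :
    E.card ≤ t * n ^ (k - 1) ∧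
    (E.card = t * n ^ (k - 1) ↔
      ∃ (i₀ : Fin k) (S : Finset (Fin n)), S.card = t ∧
        E = Finset.univ.filter (fun e => e i₀ ∈ S)) := by
  obtain ⟨k', rfl⟩ : ∃ k', k = k' + 1 := ⟨k - 1, by omega⟩
  obtain ⟨m, rfl⟩ : ∃ m, n = m + 1 := ⟨n - 1, by omega⟩
  have hm : 2 ≤ m := by omega
  have hM' : Stmt2Aux.noMatch E t := hM
  have h := Stmt2Aux.main_aux hm hM'
  simpa using h
end

section
/- Let G be a graph that is the union of six bipartite graphs G_{p,q} between pairs of parts from among six disjoint parts Y₁,…,Y₆ arranged as a K_{2,3}-pattern (parts {Y₁,Y₂} versus {Y₃,Y₄,Y₅}, giving the six pairs (Yᵢ,Yⱼ) with i∈{1,2}, j∈{3,4,5}). Suppose each G_{i,j} has at least 6 edges and has a vertex cover Iⱼ of size 2 contained in Yⱼ (the same Iⱼ for i=1,2), and let I = I₃∪I₄∪I₅ (six vertices). Then G contains a matching of size 6 saturating I, i.e., six pairwise disjoint edges each containing one vertex of I. -/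
/-!
Hall's theorem, applied to the six vertices of `I` against the eight vertices `Fin 2 × Fin 4`
of the left parts. In `G i j`, whose edges all end in `I j = {a, b}`, a vertex of `I j` has at
least `6 - 4 = 2` neighbours, since its partner has at most `4`; and `a, b` together have at
least `3`, since `6 ≤ |N(a)| + |N(b)| ≤ 2 |N(a) ∪ N(b)|`. Summing over the two left parts, every
vertex of `I` has at least `4` neighbours and every pair `I j` at least `6`. A set of at most `3`
vertices of `I` therefore has enough neighbours, and a larger one contains, by pigeonhole, some
whole pair `I j`, hence has at least `6`.
-/

open Finset

section Bipartite

lemma card_filter_prod {ι α : Type*} [Fintype ι] [Fintype α] (P : ι → α → Prop)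
    [∀ i, DecidablePred (P i)] : #{p : ι × α | P p.1 p.2} = ∑ i, #{x | P i x} := by
  simp only [card_filter, Fintype.sum_prod_type]

variable {ι α β : Type*} [Fintype ι] [Fintype α] [DecidableEq α] [DecidableEq β]

def nbhd (E : Finset (α × β)) (y : β) : Finset α := {x | (x, y) ∈ E}

@[simp]
lemma mem_nbhd {E : Finset (α × β)} {x : α} {y : β} : x ∈ nbhd E y ↔ (x, y) ∈ E := by
  simp [nbhd]

lemma card_le_card_nbhd_add_card_nbhd {E : Finset (α × β)} {a b : β}
    (hE : ∀ e ∈ E, e.2 = a ∨ e.2 = b) : #E ≤ #(nbhd E a) + #(nbhd E b) := by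
  calc #E ≤ #(nbhd E a ×ˢ ({a} : Finset β) ∪ nbhd E b ×ˢ ({b} : Finset β)) := by
        refine card_le_card fun e he => ?_
        rcases hE e he with h | h <;> simp [← h, he]
    _ ≤ #(nbhd E a) + #(nbhd E b) :=
        (card_union_le _ _).trans_eq (by simp only [card_product, card_singleton, mul_one])

lemma card_sub_card_le_card_nbhd {E : Finset (α × β)} {a b : β}
    (hE : ∀ e ∈ E, e.2 = a ∨ e.2 = b) : #E - Fintype.card α ≤ #(nbhd E a) := by
  have := card_le_card_nbhd_add_card_nbhd hE
  have := card_le_univ (nbhd E b)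
  omega

lemma card_le_two_mul_card_nbhd_union {E : Finset (α × β)} {a b : β}
    (hE : ∀ e ∈ E, e.2 = a ∨ e.2 = b) : #E ≤ 2 * #(nbhd E a ∪ nbhd E b) := by
  have := card_le_card_nbhd_add_card_nbhd hE
  have := card_le_card (subset_union_left (s₁ := nbhd E a) (s₂ := nbhd E b))
  have := card_le_card (subset_union_right (s₁ := nbhd E a) (s₂ := nbhd E b))
  omega

def unionNbhd (E : ι → Finset (α × β)) (y : β) : Finset (ι × α) := {p | p.2 ∈ nbhd (E p.1) y}

lemma sum_card_sub_card_le_card_unionNbhd {E : ι → Finset (α × β)} {a b : β}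
    (hE : ∀ i, ∀ e ∈ E i, e.2 = a ∨ e.2 = b) :
    ∑ i, (#(E i) - Fintype.card α) ≤ #(unionNbhd E a) := by
  rw [unionNbhd, card_filter_prod fun i x => x ∈ nbhd (E i) a]
  exact sum_le_sum fun i _ => by simpa [nbhd] using card_sub_card_le_card_nbhd (hE i)

lemma sum_card_le_two_mul_card_unionNbhd_union [DecidableEq ι] {E : ι → Finset (α × β)} {a b : β}
    (hE : ∀ i, ∀ e ∈ E i, e.2 = a ∨ e.2 = b) :
    ∑ i, #(E i) ≤ 2 * #(unionNbhd E a ∪ unionNbhd E b) := by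
  rw [unionNbhd, unionNbhd, ← filter_or,
    card_filter_prod fun i x => x ∈ nbhd (E i) a ∨ x ∈ nbhd (E i) b, mul_sum]
  exact sum_le_sum fun i _ => by
    simpa [nbhd, ← filter_or] using card_le_two_mul_card_nbhd_union (hE i)

end Bipartite

lemma exists_injective_mem_of_card_le_of_two_mul_card_le {κ α : Type*} [Fintype κ]
    [DecidableEq α] (t : κ × Fin 2 → Finset α) (hdeg : ∀ x, Fintype.card κ ≤ #(t x))
    (hpair : ∀ j, 2 * Fintype.card κ ≤ #(t (j, 0) ∪ t (j, 1))) :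
    ∃ f : κ × Fin 2 → α, Function.Injective f ∧ ∀ x, f x ∈ t x := by
  refine (all_card_le_biUnion_card_iff_exists_injective t).mp fun s => ?_
  rcases le_or_gt #s (Fintype.card κ) with hs | hs
  · obtain rfl | ⟨x, hx⟩ := s.eq_empty_or_nonempty
    · simp
    · exact hs.trans ((hdeg x).trans (card_le_card (subset_biUnion_of_mem t hx)))
  obtain ⟨⟨j, s₀⟩, hx, ⟨j', s₁⟩, hy, hne, rfl : j = j'⟩ :=
    exists_ne_map_eq_of_card_lt_of_maps_to (t := univ) (by simpa using hs)
      (f := Prod.fst) fun _ _ => mem_coe.mpr (mem_univ _)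
  have hpair_mem : ∀ i : Fin 2, (j, i) ∈ s := by
    have : s₀ ≠ s₁ := fun h => hne (h ▸ rfl)
    intro i
    rcases (by omega : i = s₀ ∨ i = s₁) with rfl | rfl
    exacts [hx, hy]
  calc #s ≤ Fintype.card (κ × Fin 2) := card_le_univ s
    _ = 2 * Fintype.card κ := by simp [mul_comm]
    _ ≤ #(t (j, 0) ∪ t (j, 1)) := hpair j
    _ ≤ #(s.biUnion t) := card_le_card (union_subset (subset_biUnion_of_mem t (hpair_mem 0))
          (subset_biUnion_of_mem t (hpair_mem 1)))

lemma exists_fin_two_enum_of_card_eq_two {κ β : Type*} [DecidableEq β] {I : κ → Finset β}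
    (hI : ∀ j, #(I j) = 2) :
    ∃ v : κ × Fin 2 → β, (∀ j, I j = {v (j, 0), v (j, 1)}) ∧ (∀ x, v x ∈ I x.1) ∧
      Function.Injective fun x => (x.1, v x) := by
  choose a b hab hI using fun j => card_eq_two.mp (hI j)
  refine ⟨fun x => ![a x.1, b x.1] x.2, by simpa using hI, fun ⟨j, s⟩ => ?_, ?_⟩
  · fin_cases s <;> simp [hI]
  · rintro ⟨j, s⟩ ⟨j', s'⟩ h
    simp only [Prod.mk.injEq] at h
    obtain ⟨rfl, h⟩ := h
    fin_cases s <;> fin_cases s' <;> simp_all [eq_comm]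

/-- `K_{2,3}`-pattern of bipartite graphs: left parts indexed by `Fin 2`,
right parts by `Fin 3`, each part a copy of `Fin 4`; `G i j` is the bipartite
graph between left part `i` and right part `j`. If each `G i j` has at least
6 edges and a vertex cover `I j` of size 2 inside the right part `j`
(independent of `i`), then the union contains a matching of size 6 saturating
`I = I₃ ∪ I₄ ∪ I₅`: six pairwise disjoint edges, each containing one vertex
of `I`. -/
theorem stmt_13 (G : Fin 2 → Fin 3 → Finset (Fin 4 × Fin 4))
    (I : Fin 3 → Finset (Fin 4))
    (hIcard : ∀ j, (I j).card = 2)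
    (hGcard : ∀ i j, 6 ≤ (G i j).card)
    (hcover : ∀ i j, ∀ e ∈ G i j, e.2 ∈ I j) :
    ∃ m : Fin 6 → (Fin 2 × Fin 4) × (Fin 3 × Fin 4),
      (∀ k, ((m k).1.2, (m k).2.2) ∈ G (m k).1.1 (m k).2.1) ∧
      (∀ k, (m k).2.2 ∈ I (m k).2.1) ∧
      (∀ k l, k ≠ l → (m k).1 ≠ (m l).1 ∧ (m k).2 ≠ (m l).2) := by
  obtain ⟨v, hI, hvI, hv⟩ := exists_fin_two_enum_of_card_eq_two hIcard
  have hE : ∀ j i, ∀ e ∈ G i j, e.2 = v (j, 0) ∨ e.2 = v (j, 1) := by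
    simpa [hI] using fun j i => hcover i j
  let t : Fin 3 × Fin 2 → Finset (Fin 2 × Fin 4) := fun x => unionNbhd (G · x.1) (v x)
  have hdeg : ∀ x, Fintype.card (Fin 3) ≤ #(t x) := by
    rintro ⟨j, s⟩
    have key : ∑ i, (#(G i j) - 4) ≤ #(t (j, s)) := by
      fin_cases s
      · exact sum_card_sub_card_le_card_unionNbhd (hE j)
      · exact sum_card_sub_card_le_card_unionNbhd fun i e he => (hE j i e he).symm
    have := hGcard 0 j
    have := hGcard 1 j
    simp only [Fin.sum_univ_two, Fintype.card_fin] at key ⊢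
    omega
  have hpair : ∀ j, 2 * Fintype.card (Fin 3) ≤ #(t (j, 0) ∪ t (j, 1)) := by
    intro j
    have key : ∑ i, #(G i j) ≤ 2 * #(t (j, 0) ∪ t (j, 1)) :=
      sum_card_le_two_mul_card_unionNbhd_union (hE j)
    have := hGcard 0 j
    have := hGcard 1 j
    simp only [Fin.sum_univ_two, Fintype.card_fin] at key ⊢
    omega
  obtain ⟨f, hf, hft⟩ := exists_injective_mem_of_card_le_of_two_mul_card_le t hdeg hpair
  let x : Fin 6 ≃ Fin 3 × Fin 2 := (finProdFinEquiv (m := 3) (n := 2)).symm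
  refine ⟨fun k => (f (x k), ((x k).1, v (x k))), fun k => ?_, fun k => hvI (x k),
    fun k l hkl => ⟨hf.ne (x.injective.ne hkl), hv.ne (x.injective.ne hkl)⟩⟩
  simpa [t, unionNbhd] using hft (x k)
end
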